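/- Let g2 ∈ ℂ and let p : ℝ → ℂ be infinitely differentiable with p″(x) = 6 p(x)² − (1/2) g2 for all x ∈ ℝ. Define, for infinitely differentiable ψ : ℝ → ℂ, (L3ψ)(x) = ψ‴(x) − 3 p(x) ψ′(x) − (3/2) p′(x) ψ(x) and (P2ψ)(x) = ψ″(x) − 2 p(x) ψ(x). Then P2(L3ψ)(x) = L3(P2ψ)(x) for every infinitely differentiable ψ and every x ∈ ℝ; that is, [P2, L3] = 0. -/

import Mathlib

/-- The Boussinesq Lax expression `L₃` specialized to the elliptic potentials
`q₁ = -3p`, `q₀ = 0`: `L₃ψ = ψ''' - 3pψ' - (3/2)p'ψ`. -/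
noncomputable def L3ell (p ψ : ℝ → ℂ) : ℝ → ℂ :=
  fun x => iteratedDeriv 3 ψ x - 3 * p x * deriv ψ x
    - (3 / 2 : ℂ) * deriv p x * ψ x

/-- `P₂` specialized to the elliptic potential `q₁ = -3p`:
`P₂ψ = ψ'' - 2pψ`. -/
noncomputable def P2ell (p ψ : ℝ → ℂ) : ℝ → ℂ :=
  fun x => iteratedDeriv 2 ψ x - 2 * p x * ψ x

/-- If `p'' = 6p² - g₂/2` (the second-order Weierstrass equation), then the
elliptic Lax pair commutes: `[P₂, L₃] = 0`. -/
theorem elliptic_lax_pair_commutes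
    (g2 : ℂ) (p : ℝ → ℂ) (hp : ContDiff ℝ (⊤ : ℕ∞) p)
    (hode : ∀ x : ℝ, iteratedDeriv 2 p x = 6 * (p x) ^ 2 - (1 / 2) * g2) :
    ∀ ψ : ℝ → ℂ, ContDiff ℝ (⊤ : ℕ∞) ψ → ∀ x : ℝ,
      P2ell p (L3ell p ψ) x = L3ell p (P2ell p ψ) x := by
  intro ψ hψ x
  -- basic derivative facts
  have Hp : ∀ (n : ℕ) (y : ℝ), HasDerivAt (iteratedDeriv n p) (iteratedDeriv (n+1) p y) y := by
    intro n y
    rw [iteratedDeriv_succ]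
    exact ((hp.differentiable_iteratedDeriv n (by exact_mod_cast ENat.coe_lt_top n)) y).hasDerivAt
  have Hs : ∀ (n : ℕ) (y : ℝ), HasDerivAt (iteratedDeriv n ψ) (iteratedDeriv (n+1) ψ y) y := by
    intro n y
    rw [iteratedDeriv_succ]
    exact ((hψ.differentiable_iteratedDeriv n (by exact_mod_cast ENat.coe_lt_top n)) y).hasDerivAt
  have Hp0 : ∀ y, HasDerivAt p (deriv p y) y := fun y => by
    simpa [iteratedDeriv_one, iteratedDeriv_zero] using Hp 0 y
  have Hp1 : ∀ y, HasDerivAt (deriv p) (iteratedDeriv 2 p y) y := fun y => by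
    simpa [iteratedDeriv_one] using Hp 1 y
  have Hp2 : ∀ y, HasDerivAt (iteratedDeriv 2 p) (iteratedDeriv 3 p y) y := Hp 2
  have Hs0 : ∀ y, HasDerivAt ψ (deriv ψ y) y := fun y => by
    simpa [iteratedDeriv_one, iteratedDeriv_zero] using Hs 0 y
  have Hs1 : ∀ y, HasDerivAt (deriv ψ) (iteratedDeriv 2 ψ y) y := fun y => by
    simpa [iteratedDeriv_one] using Hs 1 y
  have Hs2 : ∀ y, HasDerivAt (iteratedDeriv 2 ψ) (iteratedDeriv 3 ψ y) y := Hs 2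
  have Hs3 : ∀ y, HasDerivAt (iteratedDeriv 3 ψ) (iteratedDeriv 4 ψ y) y := Hs 3
  have Hs4 : ∀ y, HasDerivAt (iteratedDeriv 4 ψ) (iteratedDeriv 5 ψ y) y := Hs 4
  -- third derivative of p from the ODE
  have hP3 : iteratedDeriv 3 p x = 12 * p x * deriv p x := by
    have h2 : iteratedDeriv 2 p = fun z => 6 * (p z * p z) - 1 / 2 * g2 :=
      funext fun z => by rw [hode z]; ring
    have hd : HasDerivAt (fun z => 6 * (p z * p z) - 1 / 2 * g2)
        (6 * (deriv p x * p x + p x * deriv p x)) x :=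
      ((((Hp0 x).mul (Hp0 x)).const_mul 6)).sub_const _
    rw [show (3 : ℕ) = 2 + 1 from rfl, iteratedDeriv_succ, h2, hd.deriv]
    ring
  -- first derivative of L₃ψ
  have e1 : ∀ y, HasDerivAt (L3ell p ψ)
      (iteratedDeriv 4 ψ y - (3 * deriv p y * deriv ψ y + 3 * p y * iteratedDeriv 2 ψ y)
        - ((3 / 2 : ℂ) * iteratedDeriv 2 p y * ψ y + (3 / 2 : ℂ) * deriv p y * deriv ψ y)) y := by
    intro y
    exact ((Hs3 y).sub (((Hp0 y).const_mul 3).mul (Hs1 y))).sub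
      (((Hp1 y).const_mul (3 / 2 : ℂ)).mul (Hs0 y))
  have e1' : deriv (L3ell p ψ) = fun y =>
      iteratedDeriv 4 ψ y - (3 * deriv p y * deriv ψ y + 3 * p y * iteratedDeriv 2 ψ y)
        - ((3 / 2 : ℂ) * iteratedDeriv 2 p y * ψ y + (3 / 2 : ℂ) * deriv p y * deriv ψ y) :=
    funext fun y => (e1 y).deriv
  -- second derivative of L₃ψ
  have e2 : HasDerivAt (fun y =>
      iteratedDeriv 4 ψ y - (3 * deriv p y * deriv ψ y + 3 * p y * iteratedDeriv 2 ψ y)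
        - ((3 / 2 : ℂ) * iteratedDeriv 2 p y * ψ y + (3 / 2 : ℂ) * deriv p y * deriv ψ y))
      ((iteratedDeriv 5 ψ x
        - ((3 * iteratedDeriv 2 p x * deriv ψ x + 3 * deriv p x * iteratedDeriv 2 ψ x)
          + (3 * deriv p x * iteratedDeriv 2 ψ x + 3 * p x * iteratedDeriv 3 ψ x)))
        - (((3 / 2 : ℂ) * iteratedDeriv 3 p x * ψ x + (3 / 2 : ℂ) * iteratedDeriv 2 p x * deriv ψ x)
          + ((3 / 2 : ℂ) * iteratedDeriv 2 p x * deriv ψ x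
            + (3 / 2 : ℂ) * deriv p x * iteratedDeriv 2 ψ x))) x :=
    ((Hs4 x).sub ((((Hp1 x).const_mul 3).mul (Hs1 x)).add
        (((Hp0 x).const_mul 3).mul (Hs2 x)))).sub
      ((((Hp2 x).const_mul (3 / 2 : ℂ)).mul (Hs0 x)).add
        (((Hp1 x).const_mul (3 / 2 : ℂ)).mul (Hs1 x)))
  have d2 : iteratedDeriv 2 (L3ell p ψ) x =
      iteratedDeriv 5 ψ x - 3 * p x * iteratedDeriv 3 ψ x
        - (15 / 2 : ℂ) * deriv p x * iteratedDeriv 2 ψ x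
        - 6 * iteratedDeriv 2 p x * deriv ψ x
        - (3 / 2 : ℂ) * iteratedDeriv 3 p x * ψ x := by
    rw [show iteratedDeriv 2 (L3ell p ψ) = iteratedDeriv (1 + 1) (L3ell p ψ) from rfl, iteratedDeriv_succ, iteratedDeriv_one, e1', e2.deriv]
    ring
  -- first derivative of P₂ψ
  have f1 : ∀ y, HasDerivAt (P2ell p ψ)
      (iteratedDeriv 3 ψ y - (2 * deriv p y * ψ y + 2 * p y * deriv ψ y)) y := by
    intro y
    exact (Hs2 y).sub (((Hp0 y).const_mul 2).mul (Hs0 y))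
  have f1' : deriv (P2ell p ψ) = fun y =>
      iteratedDeriv 3 ψ y - (2 * deriv p y * ψ y + 2 * p y * deriv ψ y) :=
    funext fun y => (f1 y).deriv
  -- second derivative of P₂ψ
  have f2 : ∀ y, HasDerivAt (fun y =>
      iteratedDeriv 3 ψ y - (2 * deriv p y * ψ y + 2 * p y * deriv ψ y))
      (iteratedDeriv 4 ψ y
        - ((2 * iteratedDeriv 2 p y * ψ y + 2 * deriv p y * deriv ψ y)
          + (2 * deriv p y * deriv ψ y + 2 * p y * iteratedDeriv 2 ψ y))) y := by
    intro y
    exact (Hs3 y).sub ((((Hp1 y).const_mul 2).mul (Hs0 y)).add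
      (((Hp0 y).const_mul 2).mul (Hs1 y)))
  have f2' : deriv (fun y =>
      iteratedDeriv 3 ψ y - (2 * deriv p y * ψ y + 2 * p y * deriv ψ y)) = fun y =>
      iteratedDeriv 4 ψ y
        - ((2 * iteratedDeriv 2 p y * ψ y + 2 * deriv p y * deriv ψ y)
          + (2 * deriv p y * deriv ψ y + 2 * p y * iteratedDeriv 2 ψ y)) :=
    funext fun y => (f2 y).deriv
  -- third derivative of P₂ψ
  have f3 : HasDerivAt (fun y =>
      iteratedDeriv 4 ψ y
        - ((2 * iteratedDeriv 2 p y * ψ y + 2 * deriv p y * deriv ψ y)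
          + (2 * deriv p y * deriv ψ y + 2 * p y * iteratedDeriv 2 ψ y)))
      (iteratedDeriv 5 ψ x
        - (((2 * iteratedDeriv 3 p x * ψ x + 2 * iteratedDeriv 2 p x * deriv ψ x)
            + (2 * iteratedDeriv 2 p x * deriv ψ x + 2 * deriv p x * iteratedDeriv 2 ψ x))
          + ((2 * iteratedDeriv 2 p x * deriv ψ x + 2 * deriv p x * iteratedDeriv 2 ψ x)
            + (2 * deriv p x * iteratedDeriv 2 ψ x + 2 * p x * iteratedDeriv 3 ψ x)))) x :=
    (Hs4 x).sub
      (((((Hp2 x).const_mul 2).mul (Hs0 x)).add (((Hp1 x).const_mul 2).mul (Hs1 x))).add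
        ((((Hp1 x).const_mul 2).mul (Hs1 x)).add (((Hp0 x).const_mul 2).mul (Hs2 x))))
  have d3 : iteratedDeriv 3 (P2ell p ψ) x =
      iteratedDeriv 5 ψ x - 2 * p x * iteratedDeriv 3 ψ x
        - 6 * deriv p x * iteratedDeriv 2 ψ x
        - 6 * iteratedDeriv 2 p x * deriv ψ x
        - 2 * iteratedDeriv 3 p x * ψ x := by
    rw [show iteratedDeriv 3 (P2ell p ψ) = iteratedDeriv (1 + 1 + 1) (P2ell p ψ) from rfl, iteratedDeriv_succ, iteratedDeriv_succ,
      iteratedDeriv_one, f1', f2', f3.deriv]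
    ring
  -- put everything together
  have lhs_eq : P2ell p (L3ell p ψ) x =
      iteratedDeriv 2 (L3ell p ψ) x - 2 * p x * L3ell p ψ x := rfl
  have rhs_eq : L3ell p (P2ell p ψ) x =
      iteratedDeriv 3 (P2ell p ψ) x - 3 * p x * deriv (P2ell p ψ) x
        - (3 / 2 : ℂ) * deriv p x * P2ell p ψ x := rfl
  rw [lhs_eq, rhs_eq, d2, d3, f1']
  simp only [L3ell, P2ell]
  rw [hode x, hP3]
  ring
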